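/- arXiv:1206.2501 — 2 statements merged into one kernel-verified Lean document; each statement's English description precedes it below -/
import Mathlib

section
/- For all n ∈ ℕ, σ > 0 and 0 ≤ x ≤ n/σ, Hoeffding's function H_n(x,σ) = { (σ/(x+σ))^{xσ+σ²} · (n/(n−xσ))^{n−xσ} }^{n/(n+σ²)} satisfies H_n(x,σ) ≤ B(x,σ) = ((x+σ)/σ)^{−σx−σ²} e^{xσ}, i.e., Hoeffding's bound is no larger than Bennett's bound. -/
open Real

/-- trapezoid bound for log -/
lemma log_le_half_sub {y : ℝ} (hy : 1 ≤ y) : Real.log y ≤ (y - y⁻¹) / 2 := by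
  have hy0 : 0 < y := lt_of_lt_of_le one_pos hy
  rw [Real.log_le_iff_le_exp hy0]
  have ht : 0 ≤ (y - y⁻¹) / 2 := by
    have : y⁻¹ ≤ 1 := inv_le_one_of_one_le₀ hy
    linarith
  calc y ≤ 1 + (y - y⁻¹)/2 + ((y - y⁻¹)/2)^2 / 2 := by
        have h4 : 0 ≤ (y - 1)^4 := by positivity
        have hinv : y⁻¹ = 1/y := by rw [inv_eq_one_div]
        rw [hinv]
        have key : 0 ≤ (1 + (y - 1 / y) / 2 + ((y - 1 / y) / 2)^2 / 2 - y) * (8 * y^2) := by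
          have : (1 + (y - 1 / y) / 2 + ((y - 1 / y) / 2)^2 / 2 - y) * (8 * y^2) = (y-1)^4 := by
            field_simp
            ring
          rw [this]; positivity
        have h2 : (0:ℝ) < 8 * y^2 := by positivity
        have := (mul_nonneg_iff_of_pos_right h2).mp key
        linarith

    _ ≤ Real.exp ((y - y⁻¹)/2) := Real.quadratic_le_exp_of_nonneg ht

lemma trap {b c : ℝ} (hb : 0 < b) (hc : 0 ≤ c) :
    2 * b * (b + c) * Real.log ((b + c) / b) ≤ c * (2 * b + c) := by
  set y : ℝ := (b + c) / b with hy
  have hy1 : 1 ≤ y := by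
    rw [hy, le_div_iff₀ hb]; linarith
  have h := log_le_half_sub hy1
  have h2 : 2 * b * (b + c) * Real.log y ≤ 2 * b * (b + c) * ((y - y⁻¹) / 2) :=
    mul_le_mul_of_nonneg_left h (by positivity)
  have h3 : 2 * b * (b + c) * ((y - y⁻¹) / 2) = c * (2 * b + c) := by
    rw [hy]
    have hbc : (0:ℝ) < b + c := by linarith
    field_simp
    ring
  linarith

/-- Hoeffding's function `H_n(x, σ)` (on the range `0 ≤ x ≤ n/σ`). -/
noncomputable def hoeffdingFn (n : ℕ) (x σ : ℝ) : ℝ :=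
  if x ≤ n / σ then
    ((σ / (x + σ)) ^ (x * σ + σ ^ 2) *
      ((n : ℝ) / ((n : ℝ) - x * σ)) ^ ((n : ℝ) - x * σ)) ^ ((n : ℝ) / ((n : ℝ) + σ ^ 2))
  else 0

/-- Hoeffding's bound is no larger than Bennett's bound. -/
theorem hoeffding_le_bennett (n : ℕ) (x σ : ℝ) (hσ : 0 < σ) (hx : 0 ≤ x)
    (hxn : x ≤ n / σ) :
    hoeffdingFn n x σ
      ≤ ((x + σ) / σ) ^ (-(σ * x) - σ ^ 2) * Real.exp (x * σ) := by
  have hσ2 : (0:ℝ) < σ ^ 2 := by positivity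
  have hxσ : (0:ℝ) < x + σ := by linarith
  have ha : 0 ≤ x * σ := mul_nonneg hx hσ.le
  have haN : x * σ ≤ (n:ℝ) := by rwa [le_div_iff₀ hσ] at hxn
  rcases Nat.eq_zero_or_pos n with hn | hn
  · subst hn
    have hx0 : x = 0 := by
      have : x * σ = 0 := le_antisymm (by simpa using haN) ha
      rcases mul_eq_zero.mp this with h | h
      · exact h
      · exact absurd h hσ.ne'
    subst hx0
    rw [hoeffdingFn, if_pos hxn]
    simp [div_self hσ.ne']
  · -- n > 0
    have hN : (0:ℝ) < (n:ℝ) := by exact_mod_cast hn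
    set N : ℝ := (n:ℝ) with hNdef
    set a : ℝ := x * σ with hadef
    set s : ℝ := σ ^ 2 with hsdef
    have hc : (0:ℝ) < σ / (x + σ) := by positivity
    have hL0 : 0 ≤ Real.log ((x + σ) / σ) := by
      apply Real.log_nonneg
      rw [le_div_iff₀ hσ]; linarith
    set L : ℝ := Real.log ((x + σ) / σ) with hLdef
    set M : ℝ := Real.log (N / (N - a)) with hMdef
    -- trapezoid bounds
    have hL : 2 * s * (s + a) * L ≤ a * (2 * s + a) := by
      have h := trap hσ2 ha
      have harg : (σ ^ 2 + x * σ) / σ ^ 2 = (x + σ) / σ := by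
        field_simp; ring
      rw [harg] at h
      exact h
    have hM : 2 * (N - a) * N * M ≤ a * (2 * N - a) := by
      rcases lt_or_eq_of_le haN with hlt | heq
      · have h := trap (b := N - a) (c := a) (by linarith) ha
        have harg : (N - a + a) = N := by ring
        rw [harg] at h
        calc 2 * (N - a) * N * M = 2 * (N - a) * ((N - a) + a) * Real.log (N / (N - a)) := by
              rw [hMdef]; ring
          _ ≤ a * (2 * (N - a) + a) := by rw [harg]; exact h
          _ = a * (2 * N - a) := by ring
      · have hz : N - a = 0 := by rw [← heq]; ring
        rw [hz]
        have : a * (2 * N - a) = N * N := by rw [← heq]; ring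
        rw [this]
        simpa using mul_nonneg hN.le hN.le
    -- positivity of the pieces
    have hP1 : (0:ℝ) < (σ / (x + σ)) ^ (a + s) := Real.rpow_pos_of_pos hc _
    have hP2 : (0:ℝ) < (N / (N - a)) ^ (N - a) := by
      rcases lt_or_eq_of_le haN with hlt | heq
      · exact Real.rpow_pos_of_pos (div_pos hN (by linarith)) _
      · have hz : N - a = 0 := by rw [← heq]; ring
        rw [hz, Real.rpow_zero]; norm_num
    have hProd : (0:ℝ) < (σ / (x + σ)) ^ (a + s) * (N / (N - a)) ^ (N - a) :=
      mul_pos hP1 hP2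
    have hH : (0:ℝ) < ((σ / (x + σ)) ^ (a + s) * (N / (N - a)) ^ (N - a)) ^ (N / (N + s)) :=
      Real.rpow_pos_of_pos hProd _
    have hB : (0:ℝ) < ((x + σ) / σ) ^ (-(σ * x) - σ ^ 2) * Real.exp (x * σ) :=
      mul_pos (Real.rpow_pos_of_pos (by positivity) _) (Real.exp_pos _)
    -- compute the logs
    have hlogc : Real.log (σ / (x + σ)) = -L := by
      rw [hLdef, ← Real.log_inv]
      congr 1
      field_simp
    have hlogP2 : Real.log ((N / (N - a)) ^ (N - a)) = (N - a) * M := by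
      rcases lt_or_eq_of_le haN with hlt | heq
      · rw [Real.log_rpow (div_pos hN (by linarith)), hMdef]
      · have hz : N - a = 0 := by rw [← heq]; ring
        rw [hz, Real.rpow_zero, Real.log_one, zero_mul]
    have hlogH : Real.log (((σ / (x + σ)) ^ (a + s) * (N / (N - a)) ^ (N - a)) ^ (N / (N + s)))
        = N / (N + s) * ((a + s) * (-L) + (N - a) * M) := by
      rw [Real.log_rpow hProd, Real.log_mul hP1.ne' hP2.ne', Real.log_rpow hc, hlogc, hlogP2]
    have hlogB : Real.log (((x + σ) / σ) ^ (-(σ * x) - σ ^ 2) * Real.exp (x * σ))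
        = (-(σ * x) - s) * L + a := by
      rw [Real.log_mul (Real.rpow_pos_of_pos (by positivity) _).ne' (Real.exp_pos _).ne',
        Real.log_rpow (by positivity), Real.log_exp, hLdef, hadef, hsdef]
    -- the key inequality on logs
    have hNs : (0:ℝ) < N + s := by linarith
    have hkey : N / (N + s) * ((a + s) * (-L) + (N - a) * M) ≤ (-(σ * x) - s) * L + a := by
      rw [div_mul_eq_mul_div, div_le_iff₀ hNs]
      have hax : σ * x = a := by rw [hadef]; ring
      rw [hax]
      nlinarith [hL, hM, hL0]
    -- conclude
    rw [hoeffdingFn, if_pos hxn]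
    have := hkey
    calc ((σ / (x + σ)) ^ (x * σ + σ ^ 2) * ((n:ℝ) / ((n:ℝ) - x * σ)) ^ ((n:ℝ) - x * σ)) ^ ((n:ℝ) / ((n:ℝ) + σ ^ 2))
        = Real.exp (Real.log (((σ / (x + σ)) ^ (a + s) * (N / (N - a)) ^ (N - a)) ^ (N / (N + s)))) := by
          rw [Real.exp_log hH]
      _ ≤ Real.exp (Real.log (((x + σ) / σ) ^ (-(σ * x) - σ ^ 2) * Real.exp (x * σ))) := by
          rw [hlogH, hlogB]
          exact Real.exp_le_exp.mpr hkey
      _ = ((x + σ) / σ) ^ (-(σ * x) - σ ^ 2) * Real.exp (x * σ) := Real.exp_log hB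
end

section
/- For all σ > 0 and all x with 0 ≤ x in the range where both sides are defined, Hoeffding's bound is less than Bernstein's bound: H_n(x,σ) ≤ exp(−x̌²/2), where x̌ = x/√(1 + x/(3σ)). -/
open Real

private lemma mono_aux (f f' : ℝ → ℝ) (b : ℝ) (hb : 0 ≤ b)
    (hd : ∀ t ∈ Set.Icc (0:ℝ) b, HasDerivAt f (f' t) t)
    (h0 : ∀ t ∈ Set.Ioo (0:ℝ) b, 0 ≤ f' t) : f 0 ≤ f b := by
  rcases eq_or_lt_of_le hb with h | h
  · rw [← h]
  · have hmono : MonotoneOn f (Set.Icc 0 b) := by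
      apply monotoneOn_of_deriv_nonneg (convex_Icc 0 b)
      · exact fun t ht => (hd t ht).continuousAt.continuousWithinAt
      · intro t ht
        rw [interior_Icc] at ht
        exact (hd t (Set.mem_Icc_of_Ioo ht)).differentiableAt.differentiableWithinAt
      · intro t ht
        rw [interior_Icc] at ht
        rw [(hd t (Set.mem_Icc_of_Ioo ht)).deriv]
        exact h0 t ht
    exact hmono (Set.left_mem_Icc.2 hb) (Set.right_mem_Icc.2 hb) hb

/-- `log (1 - t) ≤ -t - t^2/2` for `0 ≤ t < 1`. -/
private lemma log_one_sub_le {t : ℝ} (h0 : 0 ≤ t) (h1 : t < 1) :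
    Real.log (1 - t) ≤ -t - t^2/2 := by
  have key := mono_aux (fun s => -Real.log (1 - s) - s - s^2/2)
      (fun s => (1 - s)⁻¹ - 1 - s) t h0
      (fun s hs => by
        have hs1 : (1:ℝ) - s ≠ 0 := by
          have : s < 1 := lt_of_le_of_lt hs.2 h1
          intro h; linarith [h]
        have d1 : HasDerivAt (fun s : ℝ => (1:ℝ) - s) (-1) s := by
          simpa using (hasDerivAt_id' s).const_sub (1:ℝ)
        have d2 : HasDerivAt (fun s : ℝ => Real.log (1 - s)) (-1 / (1 - s)) s :=
          d1.log hs1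
        have d3 : HasDerivAt (fun s : ℝ => -Real.log (1 - s) - s - s^2/2)
            (-(-1 / (1 - s)) - 1 - s) s := by
          have := (d2.neg.sub (hasDerivAt_id s)).sub
            (((hasDerivAt_id s).pow 2).div_const 2)
          exact this.congr_deriv (by simp)
        convert d3 using 1
        field_simp)
      (fun s hs => by
        have hs1 : (0:ℝ) < 1 - s := by
          have : s < 1 := lt_trans hs.2 h1
          linarith
        have he : (1 - s)⁻¹ - 1 - s = s^2 / (1 - s) := by field_simp; ring
        rw [he]; positivity)
  norm_num at key
  linarith

/-- `t - t^2/2 ≤ log (1 + t)` for `0 ≤ t`. -/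
private lemma le_log_one_add {t : ℝ} (h0 : 0 ≤ t) :
    t - t^2/2 ≤ Real.log (1 + t) := by
  have key := mono_aux (fun s => Real.log (1 + s) - s + s^2/2)
      (fun s => (1 + s)⁻¹ - 1 + s) t h0
      (fun s hs => by
        have hs1 : (1:ℝ) + s ≠ 0 := by nlinarith [hs.1]
        have d1 : HasDerivAt (fun s : ℝ => (1:ℝ) + s) 1 s := by
          simpa using (hasDerivAt_id' s).const_add (1:ℝ)
        have d2 : HasDerivAt (fun s : ℝ => Real.log (1 + s)) (1 / (1 + s)) s :=
          d1.log hs1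
        have d3 : HasDerivAt (fun s : ℝ => Real.log (1 + s) - s + s^2/2)
            (1 / (1 + s) - 1 + s) s := by
          have := (d2.sub (hasDerivAt_id s)).add
            (((hasDerivAt_id s).pow 2).div_const 2)
          exact this.congr_deriv (by simp)
        convert d3 using 1
        field_simp)
      (fun s hs => by
        have hs1 : (0:ℝ) < 1 + s := by linarith [hs.1]
        have he : (1 + s)⁻¹ - 1 + s = s^2 / (1 + s) := by field_simp; ring
        rw [he]; positivity)
  simp only [add_zero, Real.log_one] at key
  norm_num at key
  linarith

/-- `2u/(u+2) ≤ log (1 + u)` for `0 ≤ u`. -/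
private lemma two_div_le_log {u : ℝ} (hu : 0 ≤ u) :
    2*u/(u+2) ≤ Real.log (1 + u) := by
  set t := u / (u + 2) with ht
  have hu2 : (0:ℝ) < u + 2 := by linarith
  have ht0 : 0 ≤ t := by positivity
  have ht1 : t < 1 := by
    rw [ht, div_lt_one hu2]; linarith
  have e1 : (1:ℝ) + u = (1 + t) / (1 - t) := by
    rw [ht]; field_simp; ring
  have e2 : Real.log (1 + u) = Real.log (1 + t) - Real.log (1 - t) := by
    rw [e1, Real.log_div (by nlinarith) (by intro h; nlinarith [h])]
  have h1 := le_log_one_add ht0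
  have h2 := log_one_sub_le ht0 ht1
  have e3 : 2*u/(u+2) = 2*t := by rw [ht]; ring
  rw [e2, e3]
  linarith

/-- Bennett vs Bernstein: `3u²/(2(u+3)) ≤ (1+u)log(1+u) - u` for `u ≥ 0`. -/
private lemma bennett_ge_bernstein {u : ℝ} (hu : 0 ≤ u) :
    3*u^2/(2*u+6) ≤ (1+u)*Real.log (1+u) - u := by
  have key := mono_aux (fun s => (1+s)*Real.log (1+s) - s - 3*s^2/(2*s+6))
      (fun s => Real.log (1+s) + (1+s)*(1/(1+s)) - 1
        - (6*s*(2*s+6) - 3*s^2*2)/(2*s+6)^2) u hu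
      (fun s hs => by
        have hs1 : (1:ℝ) + s ≠ 0 := by nlinarith [hs.1]
        have hs2 : (2:ℝ)*s + 6 ≠ 0 := by nlinarith [hs.1]
        have d1 : HasDerivAt (fun s : ℝ => (1:ℝ) + s) 1 s := by
          simpa using (hasDerivAt_id' s).const_add (1:ℝ)
        have d2 : HasDerivAt (fun s : ℝ => Real.log (1 + s)) (1 / (1 + s)) s :=
          d1.log hs1
        have d3 : HasDerivAt (fun s : ℝ => (1+s)*Real.log (1+s))
            (1 * Real.log (1+s) + (1+s)*(1/(1+s))) s := d1.mul d2
        have d4 : HasDerivAt (fun s : ℝ => 3*s^2) (3*(2*s)) s := by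
          simpa using ((hasDerivAt_id s).pow 2).const_mul 3
        have d5 : HasDerivAt (fun s : ℝ => 2*s+6) 2 s := by
          simpa using ((hasDerivAt_id s).const_mul 2).add_const 6
        have d6 : HasDerivAt (fun s : ℝ => 3*s^2/(2*s+6))
            ((3*(2*s)*(2*s+6) - 3*s^2*2)/(2*s+6)^2) s := d4.div d5 hs2
        have d7 := (d3.sub (hasDerivAt_id s)).sub d6
        refine d7.congr_deriv ?_
        ring)
      (fun s hs => by
        have hs0 : 0 ≤ s := le_of_lt hs.1
        have hs1 : (0:ℝ) < 1 + s := by linarith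
        have hs2 : (0:ℝ) < 2*s + 6 := by linarith
        have hlog := two_div_le_log hs0
        have e1 : (1+s)*(1/(1+s)) = 1 := by field_simp
        rw [e1]
        have e2 : (6*s*(2*s+6) - 3*s^2*2)/(2*s+6)^2 ≤ 2*s/(s+2) := by
          rw [div_le_div_iff₀ (by positivity) (by linarith)]
          nlinarith [pow_nonneg hs0 3, sq_nonneg s]
        linarith)
  simp only [add_zero, Real.log_one] at key
  norm_num at key
  linarith

/-- `-y + y²/2 ≤ (1-y) log (1-y)` for `0 ≤ y < 1`. -/
private lemma one_sub_mul_log_ge {y : ℝ} (h0 : 0 ≤ y) (h1 : y < 1) :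
    -y + y^2/2 ≤ (1-y)*Real.log (1-y) := by
  have key := mono_aux (fun s => (1-s)*Real.log (1-s) + s - s^2/2)
      (fun s => -1 * Real.log (1-s) + (1-s)*(-1/(1-s)) + 1 - s) y h0
      (fun s hs => by
        have hs1 : (1:ℝ) - s ≠ 0 := by
          have : s < 1 := lt_of_le_of_lt hs.2 h1
          intro h; linarith
        have d1 : HasDerivAt (fun s : ℝ => (1:ℝ) - s) (-1) s := by
          simpa using (hasDerivAt_id' s).const_sub (1:ℝ)
        have d2 : HasDerivAt (fun s : ℝ => Real.log (1 - s)) (-1 / (1 - s)) s :=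
          d1.log hs1
        have d3 : HasDerivAt (fun s : ℝ => (1-s)*Real.log (1-s))
            (-1 * Real.log (1-s) + (1-s)*(-1/(1-s))) s := d1.mul d2
        have d4 := (d3.add (hasDerivAt_id s)).sub
          (((hasDerivAt_id s).pow 2).div_const 2)
        refine d4.congr_deriv ?_
        simp)
      (fun s hs => by
        have hs' : s < 1 := lt_trans hs.2 h1
        have hs1 : (0:ℝ) < 1 - s := by linarith
        have hlog : Real.log (1 - s) ≤ -s := by
          have := Real.log_le_sub_one_of_pos hs1
          linarith
        have e1 : (1-s)*(-1/(1-s)) = -1 := by field_simp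
        rw [e1]
        linarith)
  simp only [sub_zero, Real.log_one] at key
  norm_num at key
  linarith

/-- Hoeffding's bound is less than Bernstein's bound `exp(-x̌²/2)` where
`x̌ = x / √(1 + x/(3σ))`. -/
theorem hoeffding_le_bernstein (n : ℕ) (x σ : ℝ) (hσ : 0 < σ) (hx : 0 ≤ x)
    (hxn : x ≤ n / σ) :
    hoeffdingFn n x σ
      ≤ Real.exp (-(x / Real.sqrt (1 + x / (3 * σ))) ^ 2 / 2) := by
  have hs : 0 < 1 + x / (3*σ) := by positivity
  rw [hoeffdingFn, if_pos hxn, div_pow, Real.sq_sqrt hs.le]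
  rcases eq_or_lt_of_le hx with hx0 | hx0
  · -- x = 0
    rw [← hx0]
    simp only [zero_mul, zero_add, sub_zero, zero_div, ne_eq]
    rw [div_self hσ.ne', Real.one_rpow, one_mul]
    rcases Nat.eq_zero_or_pos n with hn | hn
    · subst hn
      norm_num
    · have hn' : (0:ℝ) < n := by exact_mod_cast hn
      rw [div_self hn'.ne', Real.one_rpow, Real.one_rpow]
      norm_num
  · -- x > 0
    have hxσ : 0 < x * σ := mul_pos hx0 hσ
    have hn' : x * σ ≤ (n:ℝ) := (le_div_iff₀ hσ).mp hxn
    have hm : 0 < (n:ℝ) := lt_of_lt_of_le hxσ hn'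
    have hb1 : 0 < σ / (x + σ) := by positivity
    set L := Real.log ((x+σ)/σ) with hL
    set M := Real.log ((n:ℝ)/((n:ℝ) - x*σ)) with hM
    set T := 3*σ*x^2/(2*(x+3*σ)) with hT
    -- log of first base
    have hlogb1 : Real.log (σ/(x+σ)) = -L := by
      rw [hL, show σ/(x+σ) = ((x+σ)/σ)⁻¹ by rw [inv_div], Real.log_inv]
    -- Bennett-Bernstein, scaled by σ²
    have key : T + x*σ ≤ (x*σ+σ^2)*L := by
      have h5 := bennett_ge_bernstein (u := x/σ) (by positivity)
      have e1 : (1:ℝ) + x/σ = (x+σ)/σ := by field_simp; ring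
      rw [e1] at h5
      have h7 := mul_le_mul_of_nonneg_left h5 (sq_nonneg σ)
      have e2 : σ^2 * (3*(x/σ)^2/(2*(x/σ)+6)) = T := by
        rw [hT]; field_simp; ring
      have e3 : σ^2 * ((x+σ)/σ*L - x/σ) = (x*σ+σ^2)*L - x*σ := by
        field_simp
      rw [e2, e3] at h7
      linarith
    have hTx : T ≤ x^2/2 := by
      rw [hT, div_le_div_iff₀ (by positivity) (by norm_num)]
      nlinarith [sq_nonneg x, hσ.le, hx0.le]
    have hTE : -(x^2/(1 + x/(3*σ)))/2 = -T := by
      rw [hT]; field_simp; ring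
    have hB0 : 0 ≤ (n:ℝ) - x*σ := by linarith
    -- the second-factor log bound (uniform in both cases)
    have hlog2 : 2*(n:ℝ)*(((n:ℝ) - x*σ) * M) ≤ 2*(n:ℝ)*(x*σ) - (x*σ)^2 := by
      rcases eq_or_lt_of_le hB0 with hB | hB
      · rw [← hB, zero_mul, mul_zero]
        nlinarith [hm]
      · set y := x*σ/(n:ℝ) with hy
        have hy0 : 0 ≤ y := by positivity
        have hy1 : y < 1 := by
          rw [hy, div_lt_one hm]; linarith
        have h1 := one_sub_mul_log_ge hy0 hy1
        have ey : (1:ℝ) - y = ((n:ℝ) - x*σ)/(n:ℝ) := by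
          rw [hy]; field_simp
        have elog : Real.log (1 - y) = -M := by
          rw [ey, hM, show ((n:ℝ) - x*σ)/(n:ℝ) = ((n:ℝ)/((n:ℝ) - x*σ))⁻¹ by
            rw [inv_div], Real.log_inv]
        rw [elog, ey] at h1
        have h2 := mul_le_mul_of_nonneg_left h1 (by positivity : (0:ℝ) ≤ 2*(n:ℝ)^2)
        have e6 : 2*(n:ℝ)^2 * (-y + y^2/2) = -(2*(n:ℝ)*(x*σ)) + (x*σ)^2 := by
          rw [hy]; field_simp
        have e7 : 2*(n:ℝ)^2 * (((n:ℝ) - x*σ)/(n:ℝ) * -M)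
            = -(2*(n:ℝ)*(((n:ℝ) - x*σ) * M)) := by
          field_simp
        rw [e6, e7] at h2
        linarith
    -- now rewrite the power expression and compare exponents
    rcases eq_or_lt_of_le hB0 with hB | hB
    · -- boundary case: n = xσ
      rw [← hB, Real.rpow_zero, mul_one, Real.rpow_def_of_pos hb1, ← Real.exp_mul,
        Real.exp_le_exp, hlogb1, hTE, ← mul_div_assoc,
        div_le_iff₀ (by positivity : (0:ℝ) < (n:ℝ) + σ^2)]
      have hxn2 : x*σ = (n:ℝ) := by linarith
      have h8 : (n:ℝ)*(x*σ) = (x*σ)^2 := by rw [← hxn2]; ring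
      have f1 := mul_le_mul_of_nonneg_left key hm.le
      have f3 := mul_le_mul_of_nonneg_left hTx (sq_nonneg σ)
      linarith [sq_nonneg (x*σ), f1, f3, h8]
    · -- interior case
      have hb2 : 0 < (n:ℝ)/((n:ℝ) - x*σ) := by positivity
      rw [Real.rpow_def_of_pos hb1, Real.rpow_def_of_pos hb2, ← Real.exp_add,
        ← Real.exp_mul, Real.exp_le_exp, hlogb1, ← hM, hTE, ← mul_div_assoc,
        div_le_iff₀ (by positivity : (0:ℝ) < (n:ℝ) + σ^2)]
      have f1 := mul_le_mul_of_nonneg_left key hm.le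
      have f3 := mul_le_mul_of_nonneg_left hTx (sq_nonneg σ)
      linarith [sq_nonneg (x*σ), f1, f3, hlog2]
end
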